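/- arXiv:1701.01163 — 9 statements merged into one kernel-verified Lean document; each statement's English description precedes it below -/
import Mathlib

section
/- Let r ≥ 1 and 1 ≤ m ≤ r be integers, let G₁, …, G_r be groups, let Q be a finitely generated abelian group, and let φ : G₁ × ⋯ × G_r → Q be a surjective group homomorphism. Assume that the subgroup H = ker φ virtually surjects onto m-tuples, i.e. for every 1 ≤ i₁ < ⋯ < i_m ≤ r the projection p_{i₁,…,i_m}(H) has finite index in G_{i₁} × ⋯ × G_{i_m}. Then for every 1 ≤ j₁ < ⋯ < j_{r−m} ≤ r the image φ(G_{j₁} × ⋯ × G_{j_{r−m}}) is a finite index subgroup of Q, where G_{j₁} × ⋯ × G_{j_{r−m}} denotes the subgroup of G₁ × ⋯ × G_r consisting of elements whose coordinates outside {j₁, …, j_{r−m}} are trivial. (Lemma 6.2, first part.) -/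
/-!
Let `S` be the complement of `T` and `p_S` the projection onto the factors in `S`, so that the
sub-product over `T` is `ker p_S`. For two epimorphisms `φ` and `p` out of the same group, both
`φ(ker p)` and `p(ker φ)` have the index of `ker φ ⊔ ker p`; hence
`[Q : φ(ker p_S)] = [G_S : p_S(ker φ)]`, which is finite by hypothesis since `|S| = m`.
-/

namespace Subgroup

variable {G A B : Type*} [Group G] [Group A] [Group B]

theorem index_map_ker_comm {f : G →* A} {g : G →* B} (hf : Function.Surjective f)
    (hg : Function.Surjective g) : (g.ker.map f).index = (f.ker.map g).index := by
  rw [← index_comap_of_surjective _ hf, ← index_comap_of_surjective _ hg, comap_map_eq,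
    comap_map_eq, sup_comm]

end Subgroup

namespace MonoidHom

variable {ι : Type*} (G : ι → Type*) [∀ i, Group (G i)] (s : Set ι)

theorem pi_evalMonoidHom_subtype_surjective :
    Function.Surjective (pi fun i : s => Pi.evalMonoidHom G i.1) := by
  classical
  intro x
  refine ⟨fun i => if h : i ∈ s then x ⟨i, h⟩ else 1, funext fun i => ?_⟩
  simp

theorem ker_pi_evalMonoidHom_subtype :
    (pi fun i : s => Pi.evalMonoidHom G i.1).ker = Subgroup.pi s fun _ => ⊥ := by
  ext g
  simp [funext_iff, Subgroup.mem_pi]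

end MonoidHom

theorem stmt_6_general {r : ℕ} (m : ℕ) (hmr : m ≤ r)
    (G : Fin r → Type*) [∀ i, Group (G i)]
    (Q : Type*) [CommGroup Q]
    (φ : (∀ i, G i) →* Q) (hφ : Function.Surjective φ)
    (hvsp : ∀ S : Finset (Fin r), S.card = m →
      (Subgroup.map (Pi.monoidHom (fun i : {x // x ∈ S} => Pi.evalMonoidHom G i.1))
        φ.ker).index ≠ 0) :
    ∀ T : Finset (Fin r), T.card = r - m →
      (Subgroup.map φ (Subgroup.pi ((↑T : Set (Fin r))ᶜ) (fun _ => ⊥))).index ≠ 0 := by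
  intro T hT
  have hcard : Tᶜ.card = m := by rw [Finset.card_compl, Fintype.card_fin, hT]; omega
  rw [← Finset.coe_compl, ← MonoidHom.ker_pi_evalMonoidHom_subtype,
    Subgroup.index_map_ker_comm hφ (MonoidHom.pi_evalMonoidHom_subtype_surjective G _)]
  exact hvsp Tᶜ hcard

/-- Lemma 6.2 (first part): if `φ : G₁ × ⋯ × G_r → Q` is an epimorphism onto a finitely
generated abelian group whose kernel virtually surjects onto `m`-tuples, then the image
under `φ` of any sub-product of `r − m` of the factors has finite index in `Q`. -/
theorem stmt_6 {r : ℕ} (hr : 1 ≤ r) (m : ℕ) (hm : 1 ≤ m) (hmr : m ≤ r)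
    (G : Fin r → Type*) [∀ i, Group (G i)]
    (Q : Type*) [CommGroup Q] (hQfg : Group.FG Q)
    (φ : (∀ i, G i) →* Q) (hφ : Function.Surjective φ)
    (hvsp : ∀ S : Finset (Fin r), S.card = m →
      (Subgroup.map (Pi.monoidHom (fun i : {x // x ∈ S} => Pi.evalMonoidHom G i.1))
        φ.ker).index ≠ 0) :
    ∀ T : Finset (Fin r), T.card = r - m →
      (Subgroup.map φ (Subgroup.pi ((↑T : Set (Fin r))ᶜ) (fun _ => ⊥))).index ≠ 0 :=
  stmt_6_general m hmr G Q φ hφ hvsp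
end

section
/- Let r ≥ 1 and 1 ≤ m ≤ r be integers, let G₁, …, G_r be groups, let Q be a finitely generated abelian group, and let φ : G₁ × ⋯ × G_r → Q be a surjective group homomorphism. Assume that H = ker φ surjects onto m-tuples, i.e. for every 1 ≤ i₁ < ⋯ < i_m ≤ r the projection satisfies p_{i₁,…,i_m}(H) = G_{i₁} × ⋯ × G_{i_m}. Then for every 1 ≤ j₁ < ⋯ < j_{r−m} ≤ r the restriction of φ to the subgroup G_{j₁} × ⋯ × G_{j_{r−m}} of G₁ × ⋯ × G_r is surjective onto Q. (Lemma 6.2, second part.) -/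
/-! Write `q = φ x`. Since the kernel surjects onto the coordinates outside `T`, some `h ∈ ker φ`
agrees with `x` there; then `x * h⁻¹` is supported on `T` and still maps to `q`. -/

namespace MonoidHom

variable {ι : Type*} {G : ι → Type*} [∀ i, Group (G i)] {Q : Type*} [Group Q]

theorem map_pi_bot_eq_top_of_map_ker_eq_top (φ : (∀ i, G i) →* Q)
    (hφ : Function.Surjective φ) (S : Set ι)
    (hS : φ.ker.map (pi fun i : S => Pi.evalMonoidHom G i.1) = ⊤) :
    (Subgroup.pi S fun _ => ⊥).map φ = ⊤ := by
  refine eq_top_iff.2 fun q _ => ?_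
  obtain ⟨x, rfl⟩ := hφ q
  obtain ⟨h, hker, hhx⟩ : (fun i : S => x i) ∈
      φ.ker.map (pi fun i : S => Pi.evalMonoidHom G i.1) := hS ▸ Subgroup.mem_top _
  refine ⟨x * h⁻¹, fun i hi => ?_, ?_⟩
  · have hxi : h i = x i := congrFun hhx ⟨i, hi⟩
    simp [hxi]
  · rw [map_mul, map_inv, mem_ker.1 hker, inv_one, mul_one]

end MonoidHom

theorem stmt_7_general {r : ℕ} (m : ℕ) (hmr : m ≤ r)
    (G : Fin r → Type*) [∀ i, Group (G i)]
    (Q : Type*) [CommGroup Q]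
    (φ : (∀ i, G i) →* Q) (hφ : Function.Surjective φ)
    (hsurj : ∀ S : Finset (Fin r), S.card = m →
      Subgroup.map (Pi.monoidHom (fun i : {x // x ∈ S} => Pi.evalMonoidHom G i.1))
        φ.ker = ⊤) :
    ∀ T : Finset (Fin r), T.card = r - m →
      Subgroup.map φ (Subgroup.pi ((↑T : Set (Fin r))ᶜ) (fun _ => ⊥)) = ⊤ := by
  intro T hT
  have hTc : Tᶜ.card = m := by
    rw [Finset.card_compl, hT, Fintype.card_fin]
    omega
  rw [← Finset.coe_compl]
  exact φ.map_pi_bot_eq_top_of_map_ker_eq_top hφ _ (hsurj Tᶜ hTc)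

/-- Lemma 6.2 (second part): if `φ : G₁ × ⋯ × G_r → Q` is an epimorphism onto a finitely
generated abelian group whose kernel surjects onto `m`-tuples, then the restriction of `φ`
to any sub-product of `r − m` of the factors is surjective onto `Q`. -/
theorem stmt_7 {r : ℕ} (hr : 1 ≤ r) (m : ℕ) (hm : 1 ≤ m) (hmr : m ≤ r)
    (G : Fin r → Type*) [∀ i, Group (G i)]
    (Q : Type*) [CommGroup Q] (hQfg : Group.FG Q)
    (φ : (∀ i, G i) →* Q) (hφ : Function.Surjective φ)
    (hsurj : ∀ S : Finset (Fin r), S.card = m →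
      Subgroup.map (Pi.monoidHom (fun i : {x // x ∈ S} => Pi.evalMonoidHom G i.1))
        φ.ker = ⊤) :
    ∀ T : Finset (Fin r), T.card = r - m →
      Subgroup.map φ (Subgroup.pi ((↑T : Set (Fin r))ᶜ) (fun _ => ⊥)) = ⊤ :=
  stmt_7_general m hmr G Q φ hφ hsurj
end

section
/- Let k ≥ 1 and r ≥ 3 be integers, let G₁, …, G_r be groups, let G = G₁ × ⋯ × G_r, and let ψ : G → ℤ^k be a surjective group homomorphism. Assume that there are at least three distinct indices i ∈ {1, …, r} such that the restriction of ψ to the factor G_i (embedded in G with trivial coordinates elsewhere) is surjective onto ℤ^k. Then the inclusion ker ψ ↪ G induces an injective homomorphism (ker ψ)_ab → G_ab on abelianizations; consequently the sequence 1 → (ker ψ)_ab → G_ab → ℤ^k → 1 is a short exact sequence of abelian groups. (Proposition 7.2, under condition (2).) -/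
/-!
Write `K = ker ψ`. Since `G / K` is abelian, `[G, G] ≤ K`, so exactness at `G_ab` and
surjectivity are formal; injectivity of `K_ab → G_ab` amounts to `[G, G] ≤ [K, K]`. As
`[G, G]` is the product of the `[G_i, G_i]`, it suffices to write `⁅a, b⁆` for `a, b ∈ G_i` as a
commutator of elements of `K`. Pick two further surjective factors `j ≠ l`, and `u ∈ G_j`,
`v ∈ G_l` with `ψ u = (ψ a)⁻¹`, `ψ v = (ψ b)⁻¹`. Then `a u, b v ∈ K`, and since `u` commutes
with `b` and `v`, and `v` with `a`, we get `⁅a u, b v⁆ = ⁅a, b⁆`.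
-/

open scoped commutatorElement

section Commutator

variable {M : Type*} [Group M]

theorem commutatorElement_mul_mul_of_commute {x y u v : M}
    (huy : Commute u y) (huv : Commute u v) (hvx : Commute v x) :
    ⁅x * u, y * v⁆ = ⁅x, y⁆ := by
  simp only [commutatorElement_def, mul_inv_rev]
  calc x * u * (y * v) * (u⁻¹ * x⁻¹) * (v⁻¹ * y⁻¹)
      = x * (u * y) * (v * u⁻¹) * x⁻¹ * v⁻¹ * y⁻¹ := by group
    _ = x * (y * u) * (u⁻¹ * v) * x⁻¹ * v⁻¹ * y⁻¹ := by rw [huy.eq, ← huv.inv_left.eq]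
    _ = x * y * (v * x⁻¹) * v⁻¹ * y⁻¹ := by group
    _ = x * y * (x⁻¹ * v) * v⁻¹ * y⁻¹ := by rw [hvx.inv_right.eq]
    _ = x * y * x⁻¹ * y⁻¹ := by group

end Commutator

namespace Abelianization

variable {M : Type*} [Group M]

theorem map_subtype_injective {K : Subgroup M} (h : commutator M ⊓ K ≤ ⁅K, K⁆) :
    Function.Injective (map K.subtype) := by
  rw [← MonoidHom.ker_eq_bot_iff, Subgroup.eq_bot_iff_forall]
  intro x hx
  induction x using QuotientGroup.induction_on with
  | H s =>
    have hs : (s : M) ∈ commutator M := by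
      rw [← ker_of]
      exact hx
    obtain ⟨t, ht, hts⟩ := (Subgroup.map_subtype_commutator K).ge (h ⟨hs, s.2⟩)
    rw [Subtype.ext hts] at ht
    exact (QuotientGroup.eq_one_iff _).mpr ht

theorem range_map_ker_subtype {A : Type*} [CommGroup A] (ψ : M →* A) :
    (map ψ.ker.subtype).range = (lift ψ).ker := by
  ext x
  constructor
  · rintro ⟨y, rfl⟩
    induction y using QuotientGroup.induction_on with
    | H s => exact s.2
  · induction x using QuotientGroup.induction_on with
    | H g => exact fun hg => ⟨of ⟨g, hg⟩, rfl⟩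

theorem lift_surjective {A : Type*} [CommGroup A] {ψ : M →* A}
    (hψ : Function.Surjective ψ) : Function.Surjective (lift ψ) :=
  fun z => (hψ z).elim fun g hg => ⟨of g, (lift_apply_of ψ g).trans hg⟩

end Abelianization

namespace Pi

variable {ι : Type*} [DecidableEq ι] {G : ι → Type*} [∀ i, Group (G i)] {M : Type*} [Group M]

theorem commutatorElement_mulSingle_mem_commutator_ker (ψ : (∀ i, G i) →* M) {i j l : ι}
    (hji : j ≠ i) (hli : l ≠ i) (hjl : j ≠ l)
    (hj : Function.Surjective (ψ.comp (MonoidHom.mulSingle G j)))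
    (hl : Function.Surjective (ψ.comp (MonoidHom.mulSingle G l))) (a b : G i) :
    ⁅mulSingle i a, mulSingle i b⁆ ∈ ⁅ψ.ker, ψ.ker⁆ := by
  obtain ⟨u, hu⟩ := hj (ψ (mulSingle i a))⁻¹
  obtain ⟨v, hv⟩ := hl (ψ (mulSingle i b))⁻¹
  have hau : mulSingle i a * mulSingle j u ∈ ψ.ker := by
    simp_all [MonoidHom.mem_ker]
  have hbv : mulSingle i b * mulSingle l v ∈ ψ.ker := by
    simp_all [MonoidHom.mem_ker]
  rw [← commutatorElement_mul_mul_of_commute (mulSingle_commute hji u b)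
    (mulSingle_commute hjl u v) (mulSingle_commute hli v a)]
  exact Subgroup.commutator_mem_commutator hau hbv

theorem commutator_le_commutator_ker [Finite ι] (ψ : (∀ i, G i) →* M) (S : Finset ι)
    (hS : 3 ≤ S.card) (hs : ∀ i ∈ S, Function.Surjective (ψ.comp (MonoidHom.mulSingle G i))) :
    commutator (∀ i, G i) ≤ ⁅ψ.ker, ψ.ker⁆ := by
  rw [commutator_def, ← Subgroup.pi_top Set.univ, Subgroup.commutator_pi_pi_of_finite,
    Subgroup.pi_le_iff]
  intro i
  obtain ⟨j, hj, l, hl, hjl⟩ : ∃ j ∈ S.erase i, ∃ l ∈ S.erase i, j ≠ l :=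
    Finset.one_lt_card.mp (by have := Finset.pred_card_le_card_erase (s := S) (a := i); omega)
  rw [Finset.mem_erase] at hj hl
  rw [Subgroup.map_commutator, Subgroup.commutator_le]
  rintro _ ⟨a, -, rfl⟩ _ ⟨b, -, rfl⟩
  exact commutatorElement_mulSingle_mem_commutator_ker ψ hj.1 hl.1 hjl (hs j hj.2) (hs l hl.2) a b

end Pi

theorem stmt_9_general {k r : ℕ}
    (G : Fin r → Type*) [∀ i, Group (G i)]
    (ψ : (∀ i, G i) →* Multiplicative (Fin k → ℤ)) (hψ : Function.Surjective ψ)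
    (i₁ i₂ i₃ : Fin r) (h12 : i₁ ≠ i₂) (h13 : i₁ ≠ i₃) (h23 : i₂ ≠ i₃)
    (hs : ∀ i ∈ ({i₁, i₂, i₃} : Set (Fin r)),
      Function.Surjective (ψ.comp (MonoidHom.mulSingle G i))) :
    Function.Injective (Abelianization.map ψ.ker.subtype) ∧
    (Abelianization.map ψ.ker.subtype).range = (Abelianization.lift ψ).ker ∧
    Function.Surjective (Abelianization.lift ψ) := by
  have hcard : ({i₁, i₂, i₃} : Finset (Fin r)).card = 3 :=
    Finset.card_eq_three.mpr ⟨i₁, i₂, i₃, h12, h13, h23, rfl⟩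
  have hle := Pi.commutator_le_commutator_ker ψ {i₁, i₂, i₃} hcard.ge
    fun i hi => hs i (by simpa using hi)
  exact ⟨Abelianization.map_subtype_injective (inf_le_left.trans hle),
    Abelianization.range_map_ker_subtype ψ, Abelianization.lift_surjective hψ⟩

/-- Proposition 7.2 (condition (2)): if `ψ : G₁ × ⋯ × G_r → ℤ^k` is an epimorphism whose
restriction to at least three distinct factors is surjective, then the inclusion
`ker ψ ↪ G` induces an injection on abelianizations, yielding a short exact sequence
`1 → (ker ψ)_ab → G_ab → ℤ^k → 1`. -/
theorem stmt_9 {k r : ℕ} (hk : 1 ≤ k) (hr : 3 ≤ r)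
    (G : Fin r → Type*) [∀ i, Group (G i)]
    (ψ : (∀ i, G i) →* Multiplicative (Fin k → ℤ)) (hψ : Function.Surjective ψ)
    (i₁ i₂ i₃ : Fin r) (h12 : i₁ ≠ i₂) (h13 : i₁ ≠ i₃) (h23 : i₂ ≠ i₃)
    (hs : ∀ i ∈ ({i₁, i₂, i₃} : Set (Fin r)),
      Function.Surjective (ψ.comp (MonoidHom.mulSingle G i))) :
    Function.Injective (Abelianization.map ψ.ker.subtype) ∧
    (Abelianization.map ψ.ker.subtype).range = (Abelianization.lift ψ).ker ∧
    Function.Surjective (Abelianization.lift ψ) :=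
  stmt_9_general G ψ hψ i₁ i₂ i₃ h12 h13 h23 hs
end

section
/- Let r ≥ 2 be an integer, let G₁, …, G_r be groups, let G = G₁ × ⋯ × G_r, and let ψ : G → ℤ be a surjective group homomorphism such that ker ψ is subdirect in G₁ × ⋯ × G_r, i.e. p_i(ker ψ) = G_i for the coordinate projection p_i and every 1 ≤ i ≤ r. Then the inclusion ker ψ ↪ G induces an injective homomorphism (ker ψ)_ab → G_ab on abelianizations; consequently the sequence 1 → (ker ψ)_ab → G_ab → ℤ → 1 is a short exact sequence of abelian groups. (Proposition 7.2, under condition (1).) -/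
open scoped commutatorElement

private lemma comm_aux {M : Type*} [Group M] (u v c d : M)
    (hcv : Commute c v) (hcd : Commute c d) (hdu : Commute d u) :
    ⁅u * c, v * d⁆ = ⁅u, v⁆ := by
  have h1 : ∀ x : M, c * (v * x) = v * (c * x) := fun x => by
    rw [← mul_assoc, hcv.eq, mul_assoc]
  have h2 : ∀ x : M, c * (d * x) = d * (c * x) := fun x => by
    rw [← mul_assoc, hcd.eq, mul_assoc]
  have h3 : ∀ x : M, d * (u⁻¹ * x) = u⁻¹ * (d * x) := fun x => by
    rw [← mul_assoc, hdu.inv_right.eq, mul_assoc]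
  simp only [commutatorElement_def, mul_inv_rev, mul_assoc, h1, h2, h3, mul_inv_cancel_left]

/-- Proposition 7.2 (condition (1)): if `ψ : G₁ × ⋯ × G_r → ℤ` is an epimorphism whose
kernel is subdirect, then the inclusion `ker ψ ↪ G` induces an injection on
abelianizations, yielding a short exact sequence `1 → (ker ψ)_ab → G_ab → ℤ → 1`. -/
theorem stmt_10 {r : ℕ} (hr : 2 ≤ r)
    (G : Fin r → Type*) [∀ i, Group (G i)]
    (ψ : (∀ i, G i) →* Multiplicative ℤ) (hψ : Function.Surjective ψ)
    (hsubdirect : ∀ i, Subgroup.map (Pi.evalMonoidHom G i) ψ.ker = ⊤) :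
    Function.Injective (Abelianization.map ψ.ker.subtype) ∧
    (Abelianization.map ψ.ker.subtype).range = (Abelianization.lift ψ).ker ∧
    Function.Surjective (Abelianization.lift ψ) := by
  classical
  set N := ψ.ker with hN
  -- Every single-coordinate commutator lies in the image of the commutator subgroup of N.
  have single_mem : ∀ (i : Fin r) (a b : G i),
      Pi.mulSingle i ⁅a, b⁆ ∈ (commutator N).map N.subtype := by
    intro i a b
    obtain ⟨g₀, hg₀⟩ := hψ (Multiplicative.ofAdd 1)
    have hmem : g₀ i ∈ Subgroup.map (Pi.evalMonoidHom G i) ψ.ker := by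
      rw [hsubdirect i]; trivial
    obtain ⟨h, hh, hhi⟩ := hmem
    set s : ∀ j, G j := h⁻¹ * g₀ with hs
    have hsi : s i = 1 := by
      have : (Pi.evalMonoidHom G i) h = g₀ i := hhi
      simp only [hs, Pi.mul_apply, Pi.inv_apply]
      simp [Pi.evalMonoidHom] at this
      rw [this]; group
    have hψs : ψ s = Multiplicative.ofAdd 1 := by
      have hh1 : ψ h = 1 := hh
      simp [hs, map_mul, map_inv, hh1, hg₀]
    -- commuting with single coordinates
    have hcomm : ∀ (c : G i) (t : ∀ j, G j), t i = 1 → Commute t (Pi.mulSingle i c) := by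
      intro c t ht
      show t * Pi.mulSingle i c = Pi.mulSingle i c * t
      funext j
      by_cases hj : j = i
      · subst hj; simp [ht]
      · simp [Pi.mulSingle_eq_of_ne hj]
    -- the adjusted elements, lying in the kernel
    have hker : ∀ (c : G i),
        Pi.mulSingle i c * s ^ (-(ψ (Pi.mulSingle i c)).toAdd) ∈ N := by
      intro c
      have h2 : (ψ (Pi.mulSingle i c * s ^ (-(ψ (Pi.mulSingle i c)).toAdd))).toAdd = (0 : ℤ) := by
        rw [map_mul, map_zpow, hψs, toAdd_mul, toAdd_zpow, toAdd_ofAdd, smul_eq_mul, mul_one,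
          add_neg_cancel]
      have h3 : ψ (Pi.mulSingle i c * s ^ (-(ψ (Pi.mulSingle i c)).toAdd)) = 1 :=
        Multiplicative.toAdd.injective (by simpa using h2)
      exact h3
    set ka := -(ψ (Pi.mulSingle i a)).toAdd
    set kb := -(ψ (Pi.mulSingle i b)).toAdd
    set xa : ∀ j, G j := Pi.mulSingle i a * s ^ ka with hxa
    set xb : ∀ j, G j := Pi.mulSingle i b * s ^ kb with hxb
    have hcab : ⁅xa, xb⁆ = Pi.mulSingle i ⁅a, b⁆ := by
      have h1 : Pi.mulSingle i ⁅a, b⁆ = ⁅Pi.mulSingle i a, Pi.mulSingle i b⁆ :=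
        map_commutatorElement (MonoidHom.mulSingle G i) a b
      rw [h1, hxa, hxb]
      exact comm_aux _ _ _ _ ((hcomm b s hsi).zpow_left ka)
        (Commute.zpow_zpow_self s ka kb) ((hcomm a s hsi).zpow_left kb)
    refine ⟨⁅(⟨xa, hker a⟩ : N), (⟨xb, hker b⟩ : N)⁆, ?_, ?_⟩
    · exact Subgroup.commutator_mem_commutator (Subgroup.mem_top _) (Subgroup.mem_top _)
    · rw [map_commutatorElement]
      exact hcab
  have key : commutator (∀ i, G i) ≤ (commutator N).map N.subtype := by
    rw [commutator_def, Subgroup.commutator_le]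
    intro g _ g' _
    rw [← Finset.noncommProd_mulSingle ⁅g, g'⁆]
    exact Subgroup.noncommProd_mem _ _ fun i _ => single_mem i (g i) (g' i)
  refine ⟨?_, ?_, ?_⟩
  · rw [injective_iff_map_eq_one]
    intro x hx
    obtain ⟨n, rfl⟩ : ∃ n : N, Abelianization.of n = x :=
      QuotientGroup.induction_on x fun n => ⟨n, rfl⟩
    rw [Abelianization.map_of] at hx
    have hmem : N.subtype n ∈ commutator (∀ i, G i) :=
      (QuotientGroup.eq_one_iff (N.subtype n)).mp hx
    obtain ⟨m, hm, hmn⟩ := key hmem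
    have : m = n := Subtype.ext hmn
    subst this
    exact (QuotientGroup.eq_one_iff m).mpr hm
  · ext x
    simp only [MonoidHom.mem_range, MonoidHom.mem_ker]
    constructor
    · rintro ⟨y, rfl⟩
      obtain ⟨n, rfl⟩ : ∃ n : N, Abelianization.of n = y :=
        QuotientGroup.induction_on y fun n => ⟨n, rfl⟩
      rw [Abelianization.map_of, Abelianization.lift_apply_of]
      exact n.2
    · intro hx
      obtain ⟨g, rfl⟩ : ∃ g, Abelianization.of g = x :=
        QuotientGroup.induction_on x fun g => ⟨g, rfl⟩
      rw [Abelianization.lift_apply_of] at hx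
      exact ⟨Abelianization.of (⟨g, hx⟩ : N), by rw [Abelianization.map_of]; rfl⟩
  · intro z
    obtain ⟨g, hg⟩ := hψ z
    exact ⟨Abelianization.of g, by rw [Abelianization.lift_apply_of, hg]⟩
end

section
/- Let k ≥ 1 and r ≥ 3 be integers, let G₁, …, G_r be groups, let G = G₁ × ⋯ × G_r, and let ψ : G → ℤ^k be a surjective group homomorphism such that the restriction of ψ to each of at least three distinct factors G_i is surjective onto ℤ^k. Then the commutator subgroup of ker ψ equals the commutator subgroup of G, i.e. [ker ψ, ker ψ] = [G, G] as subgroups of G. (Key claim in the proof of Proposition 7.2.) -/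
/-!
Pick `j ≠ l` among the three distinguished factors, both different from `i`. For `x, y ∈ Gᵢ`,
surjectivity on `Gⱼ` and `Gₗ` gives `u ∈ Gⱼ`, `v ∈ Gₗ` with `xu, yv ∈ ker ψ`, and since the
factors `Gᵢ, Gⱼ, Gₗ` commute pairwise, `⁅xu, yv⁆ = ⁅x, y⁆`. So every commutator inside a single
factor lies in `⁅ker ψ, ker ψ⁆`, and these generate `[G, G]`.
-/

open scoped commutatorElement

theorem commutatorElement_mul_mul_of_commute_s11 {G : Type*} [Group G] {a b c d : G}
    (hcb : Commute c b) (hcd : Commute c d) (had : Commute a d) :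
    ⁅a * c, b * d⁆ = ⁅a, b⁆ := by
  simp only [commutatorElement_def, mul_inv_rev]
  calc a * c * (b * d) * (c⁻¹ * a⁻¹) * (d⁻¹ * b⁻¹)
      = a * b * (d * a⁻¹) * d⁻¹ * b⁻¹ := by
        rw [mul_assoc a c, (hcb.mul_right hcd).eq]; group
    _ = a * b * (a⁻¹ * d) * d⁻¹ * b⁻¹ := by rw [had.inv_left.symm.eq]
    _ = a * b * a⁻¹ * b⁻¹ := by group

theorem Pi.commutator_le_of_mulSingle_mem {ι : Type*} [Finite ι] [DecidableEq ι]
    {G : ι → Type*} [∀ i, Group (G i)] {H : Subgroup (∀ i, G i)}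
    (h : ∀ i (x y : G i), ⁅Pi.mulSingle i x, Pi.mulSingle i y⁆ ∈ H) :
    commutator (∀ i, G i) ≤ H := by
  have hpi : commutator (∀ i, G i) = Subgroup.pi Set.univ fun i ↦ ⁅(⊤ : Subgroup (G i)), ⊤⁆ := by
    rw [commutator_def, ← Subgroup.commutator_pi_pi_of_finite]
    congr 1 <;> · ext g; simp [Subgroup.mem_pi]
  rw [hpi, Subgroup.pi_le_iff]
  intro i
  rw [Subgroup.map_commutator, Subgroup.commutator_le]
  rintro _ ⟨x, -, rfl⟩ _ ⟨y, -, rfl⟩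
  exact h i x y

theorem Pi.mulSingle_commutator_mem_commutator_ker {ι : Type*} [DecidableEq ι]
    {G : ι → Type*} [∀ i, Group (G i)] {A : Type*} [Group A] (ψ : (∀ i, G i) →* A)
    {i j l : ι} (hji : j ≠ i) (hli : l ≠ i) (hjl : j ≠ l)
    (hj : Function.Surjective (ψ.comp (MonoidHom.mulSingle G j)))
    (hl : Function.Surjective (ψ.comp (MonoidHom.mulSingle G l))) (x y : G i) :
    ⁅Pi.mulSingle i x, Pi.mulSingle i y⁆ ∈ ⁅ψ.ker, ψ.ker⁆ := by
  obtain ⟨u, hu⟩ := hj (ψ (Pi.mulSingle i x))⁻¹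
  obtain ⟨v, hv⟩ := hl (ψ (Pi.mulSingle i y))⁻¹
  simp only [MonoidHom.comp_apply, MonoidHom.mulSingle_apply] at hu hv
  have hxu : Pi.mulSingle i x * Pi.mulSingle j u ∈ ψ.ker := by
    rw [MonoidHom.mem_ker, map_mul, hu, mul_inv_cancel]
  have hyv : Pi.mulSingle i y * Pi.mulSingle l v ∈ ψ.ker := by
    rw [MonoidHom.mem_ker, map_mul, hv, mul_inv_cancel]
  rw [← commutatorElement_mul_mul_of_commute_s11 (Pi.mulSingle_commute hji u y)
    (Pi.mulSingle_commute hjl u v) (Pi.mulSingle_commute hli.symm x v)]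
  exact Subgroup.commutator_mem_commutator hxu hyv

theorem exists_two_ne_of_three {α : Type*} {a b c : α} (hab : a ≠ b) (hac : a ≠ c)
    (hbc : b ≠ c) (x : α) :
    ∃ j ∈ ({a, b, c} : Set α), ∃ l ∈ ({a, b, c} : Set α), j ≠ x ∧ l ≠ x ∧ j ≠ l := by
  rcases eq_or_ne x a with rfl | hxa
  · exact ⟨b, by simp, c, by simp, hab.symm, hac.symm, hbc⟩
  rcases eq_or_ne x b with rfl | hxb
  · exact ⟨a, by simp, c, by simp, hxa.symm, hbc.symm, hac⟩
  · exact ⟨a, by simp, b, by simp, hxa.symm, hxb.symm, hab⟩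

theorem stmt_11_general {k r : ℕ}
    (G : Fin r → Type*) [∀ i, Group (G i)]
    (ψ : (∀ i, G i) →* Multiplicative (Fin k → ℤ))
    (i₁ i₂ i₃ : Fin r) (h12 : i₁ ≠ i₂) (h13 : i₁ ≠ i₃) (h23 : i₂ ≠ i₃)
    (hs : ∀ i ∈ ({i₁, i₂, i₃} : Set (Fin r)),
      Function.Surjective (ψ.comp (MonoidHom.mulSingle G i))) :
    Subgroup.map ψ.ker.subtype (commutator ↥ψ.ker) = commutator (∀ i, G i) := by
  rw [Subgroup.map_subtype_commutator]
  refine le_antisymm (Subgroup.commutator_mono le_top le_top) ?_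
  refine Pi.commutator_le_of_mulSingle_mem fun i x y ↦ ?_
  obtain ⟨j, hj, l, hl, hji, hli, hjl⟩ := exists_two_ne_of_three h12 h13 h23 i
  exact Pi.mulSingle_commutator_mem_commutator_ker ψ hji hli hjl (hs j hj) (hs l hl) x y

/-- Key claim in the proof of Proposition 7.2: under the hypotheses of condition (2),
the commutator subgroup of `ker ψ` equals the commutator subgroup of `G = G₁ × ⋯ × G_r`
(as subgroups of `G`). -/
theorem stmt_11 {k r : ℕ} (hk : 1 ≤ k) (hr : 3 ≤ r)
    (G : Fin r → Type*) [∀ i, Group (G i)]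
    (ψ : (∀ i, G i) →* Multiplicative (Fin k → ℤ)) (hψ : Function.Surjective ψ)
    (i₁ i₂ i₃ : Fin r) (h12 : i₁ ≠ i₂) (h13 : i₁ ≠ i₃) (h23 : i₂ ≠ i₃)
    (hs : ∀ i ∈ ({i₁, i₂, i₃} : Set (Fin r)),
      Function.Surjective (ψ.comp (MonoidHom.mulSingle G i))) :
    Subgroup.map ψ.ker.subtype (commutator ↥ψ.ker) = commutator (∀ i, G i) :=
  stmt_11_general G ψ i₁ i₂ i₃ h12 h13 h23 hs
end

section
/- Let k ≥ 1 and r ≥ 3 be integers, let G₁, …, G_r be finitely generated groups, let G = G₁ × ⋯ × G_r, and let ψ : G → ℤ^k be a surjective group homomorphism such that the restriction of ψ to each of at least three distinct factors G_i is surjective onto ℤ^k. Then the first Betti numbers satisfy b₁(G) = k + b₁(ker ψ). (Proposition 7.2, Betti number identity.) -/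
open scoped TensorProduct
open scoped commutatorElement

/-- The first Betti number of a group `G`: the rank of its abelianization, i.e. the
dimension over `ℚ` of `G_ab ⊗_ℤ ℚ`. -/
noncomputable def firstBetti (G : Type*) [Group G] : ℕ :=
  Module.finrank ℚ (ℚ ⊗[ℤ] Additive (Abelianization G))

instance : Module.Flat ℤ ℚ := IsLocalization.flat ℚ (nonZeroDivisors ℤ)

section Aux

variable {k r : ℕ} {G : Fin r → Type*} [∀ i, Group (G i)]

lemma aux_group_fg_pi (hfg : ∀ i, Group.FG (G i)) : Group.FG (∀ i, G i) := by
  classical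
  have h := fun i => (Group.fg_iff (G := G i)).mp (hfg i)
  choose S hS hSfin using h
  rw [Group.fg_iff]
  refine ⟨⋃ i, (MonoidHom.mulSingle G i) '' (S i), ?_,
    Set.finite_iUnion fun i => (hSfin i).image _⟩
  rw [eq_top_iff]
  intro g _
  rw [← Finset.noncommProd_mulSingle g]
  refine Subgroup.noncommProd_mem _ _ fun i _ => ?_
  have h1 : Pi.mulSingle i (g i) ∈ Subgroup.map (MonoidHom.mulSingle G i) ⊤ :=
    ⟨g i, trivial, rfl⟩
  rw [← hS i, MonoidHom.map_closure] at h1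
  exact Subgroup.closure_mono
    (Set.subset_iUnion (fun i => (MonoidHom.mulSingle G i) '' (S i)) i) h1

lemma aux_module_finite_ab (H : Type*) [Group H] [Group.FG H] :
    Module.Finite ℤ (Additive (Abelianization H)) := by
  have hsurj : Function.Surjective (Abelianization.of (G := H)) :=
    fun x => Quotient.inductionOn' x fun a => ⟨a, rfl⟩
  have : Group.FG (Abelianization H) := Group.fg_of_surjective hsurj
  exact Module.Finite.iff_addGroup_fg.mpr inferInstance

/-- A commutator of a single factor, embedded in the product, lies in the kernel and
dies in the abelianization of the kernel. -/
lemma aux_single_commutator (ψ : (∀ i, G i) →* Multiplicative (Fin k → ℤ))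
    {i j j' : Fin r} (hji : j ≠ i) (hj'i : j' ≠ i) (hjj' : j ≠ j')
    (hj : Function.Surjective (ψ.comp (MonoidHom.mulSingle G j)))
    (hj' : Function.Surjective (ψ.comp (MonoidHom.mulSingle G j')))
    (a b : G i) :
    ∃ hm : Pi.mulSingle i ⁅a, b⁆ ∈ ψ.ker,
      (Abelianization.of (⟨Pi.mulSingle i ⁅a, b⁆, hm⟩ : ψ.ker)) = 1 := by
  classical
  obtain ⟨h, hh⟩ := hj (ψ (Pi.mulSingle i a))
  obtain ⟨h', hh'⟩ := hj' (ψ (Pi.mulSingle i b))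
  simp only [MonoidHom.comp_apply, MonoidHom.mulSingle_apply] at hh hh'
  set n₁ : ∀ l, G l := Pi.mulSingle i a * (Pi.mulSingle j h)⁻¹ with hn₁def
  set n₂ : ∀ l, G l := Pi.mulSingle i b * (Pi.mulSingle j' h')⁻¹ with hn₂def
  have hn₁ : n₁ ∈ ψ.ker := by
    rw [MonoidHom.mem_ker, hn₁def, map_mul, map_inv, hh]
    exact mul_inv_cancel _
  have hn₂ : n₂ ∈ ψ.ker := by
    rw [MonoidHom.mem_ker, hn₂def, map_mul, map_inv, hh']
    exact mul_inv_cancel _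
  have key : ⁅n₁, n₂⁆ = Pi.mulSingle i ⁅a, b⁆ := by
    funext l
    simp only [commutatorElement_def, hn₁def, hn₂def, Pi.mul_apply, Pi.inv_apply]
    rcases eq_or_ne l i with rfl | hli
    · simp only [Pi.mulSingle_eq_same, Pi.mulSingle_eq_of_ne hji.symm,
        Pi.mulSingle_eq_of_ne hj'i.symm]
      group
    · rcases eq_or_ne l j with rfl | hlj
      · simp only [Pi.mulSingle_eq_same, Pi.mulSingle_eq_of_ne hli,
          Pi.mulSingle_eq_of_ne hjj'.symm, Pi.mulSingle_eq_of_ne hjj']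
        group
      · rcases eq_or_ne l j' with rfl | hlj'
        · simp only [Pi.mulSingle_eq_same, Pi.mulSingle_eq_of_ne hli,
            Pi.mulSingle_eq_of_ne hjj'.symm, Pi.mulSingle_eq_of_ne hjj']
          group
        · simp only [Pi.mulSingle_eq_of_ne hli, Pi.mulSingle_eq_of_ne hlj,
            Pi.mulSingle_eq_of_ne hlj']
          group
  have hm : Pi.mulSingle i ⁅a, b⁆ ∈ ψ.ker := by
    rw [← key, commutatorElement_def]
    exact mul_mem (mul_mem (mul_mem hn₁ hn₂) (inv_mem hn₁)) (inv_mem hn₂)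
  refine ⟨hm, ?_⟩
  have heq : (⟨Pi.mulSingle i ⁅a, b⁆, hm⟩ : ψ.ker) = ⁅(⟨n₁, hn₁⟩ : ψ.ker), ⟨n₂, hn₂⟩⁆ :=
    Subtype.ext key.symm
  rw [heq, map_commutatorElement]
  exact commutatorElement_eq_one_iff_commute.mpr (Commute.all _ _)

end Aux

/-- Proposition 7.2 (Betti number identity): if `ψ : G₁ × ⋯ × G_r → ℤ^k` is an epimorphism
of finitely generated groups whose restriction to at least three distinct factors is
surjective, then `b₁(G) = k + b₁(ker ψ)`. -/
theorem stmt_12 {k r : ℕ} (hk : 1 ≤ k) (hr : 3 ≤ r)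
    (G : Fin r → Type*) [∀ i, Group (G i)] (hfg : ∀ i, Group.FG (G i))
    (ψ : (∀ i, G i) →* Multiplicative (Fin k → ℤ)) (hψ : Function.Surjective ψ)
    (i₁ i₂ i₃ : Fin r) (h12 : i₁ ≠ i₂) (h13 : i₁ ≠ i₃) (h23 : i₂ ≠ i₃)
    (hs : ∀ i ∈ ({i₁, i₂, i₃} : Set (Fin r)),
      Function.Surjective (ψ.comp (MonoidHom.mulSingle G i))) :
    firstBetti (∀ i, G i) = k + firstBetti ↥ψ.ker := by
  classical
  have hs1 := hs i₁ (by simp)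
  have hs2 := hs i₂ (by simp)
  have hs3 := hs i₃ (by simp)
  -- per-factor commutator elements die in the abelianization of the kernel
  have hsingle : ∀ (i : Fin r) (c : G i), c ∈ commutator (G i) →
      ∃ hm : Pi.mulSingle i c ∈ ψ.ker,
        (Abelianization.of (⟨Pi.mulSingle i c, hm⟩ : ψ.ker)) = 1 := by
    intro i c hc
    obtain ⟨j, j', hjsurj, hj'surj, hji, hj'i, hjj'⟩ :
        ∃ j j', Function.Surjective (ψ.comp (MonoidHom.mulSingle G j)) ∧
          Function.Surjective (ψ.comp (MonoidHom.mulSingle G j')) ∧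
          j ≠ i ∧ j' ≠ i ∧ j ≠ j' := by
      rcases eq_or_ne i i₁ with rfl | h1
      · exact ⟨i₂, i₃, hs2, hs3, h12.symm, h13.symm, h23⟩
      rcases eq_or_ne i i₂ with rfl | h2
      · exact ⟨i₁, i₃, hs1, hs3, h12, h23.symm, h13⟩
      · exact ⟨i₁, i₂, hs1, hs2, h1.symm, h2.symm, h12⟩
    rw [commutator_eq_closure] at hc
    induction hc using Subgroup.closure_induction with
    | mem x hx =>
      obtain ⟨a, b, rfl⟩ := hx
      exact aux_single_commutator ψ hji hj'i hjj' hjsurj hj'surj a b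
    | one =>
      refine ⟨by simp [MonoidHom.mem_ker], ?_⟩
      have h1' : (⟨Pi.mulSingle i (1 : G i), by simp [MonoidHom.mem_ker]⟩ : ψ.ker) = 1 :=
        Subtype.ext (by simp)
      rw [h1', map_one]
    | mul x y hx hy ihx ihy =>
      obtain ⟨hmx, hox⟩ := ihx
      obtain ⟨hmy, hoy⟩ := ihy
      have hmem : Pi.mulSingle i (x * y) ∈ ψ.ker := by
        rw [Pi.mulSingle_mul]; exact mul_mem hmx hmy
      refine ⟨hmem, ?_⟩
      have hpm : (⟨Pi.mulSingle i (x * y), hmem⟩ : ψ.ker)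
          = ⟨Pi.mulSingle i x, hmx⟩ * ⟨Pi.mulSingle i y, hmy⟩ :=
        Subtype.ext (by simp [Pi.mulSingle_mul])
      rw [hpm, map_mul, hox, hoy, mul_one]
    | inv x hx ihx =>
      obtain ⟨hmx, hox⟩ := ihx
      have hmem : Pi.mulSingle i x⁻¹ ∈ ψ.ker := by
        rw [Pi.mulSingle_inv]; exact inv_mem hmx
      refine ⟨hmem, ?_⟩
      have hpm : (⟨Pi.mulSingle i x⁻¹, hmem⟩ : ψ.ker) = (⟨Pi.mulSingle i x, hmx⟩)⁻¹ :=
        Subtype.ext (by simp [Pi.mulSingle_inv])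
      rw [hpm, map_inv, hox, inv_one]
  -- elements of the kernel lying in the commutator subgroup die in `Ab(ker ψ)`
  have hker_comm : ∀ (n : ψ.ker), (n : ∀ i, G i) ∈ commutator (∀ i, G i) →
      Abelianization.of n = 1 := by
    intro n hc
    have hpi : commutator (∀ i, G i)
        = Subgroup.pi Set.univ fun i => commutator (G i) := by
      rw [commutator_def]
      calc ⁅(⊤ : Subgroup (∀ i, G i)), ⊤⁆
          = ⁅Subgroup.pi Set.univ fun _ => ⊤, Subgroup.pi Set.univ fun _ => ⊤⁆ := by
            rw [Subgroup.pi_top]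
        _ = Subgroup.pi Set.univ fun i => ⁅(⊤ : Subgroup (G i)), ⊤⁆ :=
            Subgroup.commutator_pi_pi_of_finite _ _
    rw [hpi, Subgroup.mem_pi] at hc
    have hcomp : ∀ i, ((n : ∀ i, G i) i) ∈ commutator (G i) :=
      fun i => hc i (Set.mem_univ i)
    choose hm hof using fun i => hsingle i ((n : ∀ i, G i) i) (hcomp i)
    set m : Fin r → ψ.ker := fun i => ⟨Pi.mulSingle i ((n : ∀ i, G i) i), hm i⟩ with hmdef
    have hcommute : (↑(Finset.univ : Finset (Fin r)) : Set (Fin r)).Pairwise (Function.onFun Commute m) := by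
      intro a _ b _ hab
      have hcc : Commute ((m a) : ∀ i, G i) ((m b) : ∀ i, G i) :=
        Pi.mulSingle_apply_commute _ a b
      exact Subtype.ext hcc
    have hsub : ψ.ker.subtype (Finset.univ.noncommProd m hcommute) = (n : ∀ i, G i) := by
      rw [Finset.map_noncommProd]
      exact Finset.noncommProd_mulSingle _
    have hprod : n = Finset.univ.noncommProd m hcommute := Subtype.ext hsub.symm
    rw [hprod, Finset.map_noncommProd _ _ _ (Abelianization.of (G := ψ.ker)),
      Finset.noncommProd_eq_prod]
    exact Finset.prod_eq_one fun i _ => hof i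
  -- the two homomorphisms on abelianizations
  set f : Abelianization ↥ψ.ker →* Abelianization (∀ i, G i) :=
    Abelianization.map ψ.ker.subtype with hfdef
  set g : Abelianization (∀ i, G i) →* Multiplicative (Fin k → ℤ) :=
    Abelianization.lift ψ with hgdef
  have hofsurj : ∀ (H : Type _) (_ : Group H), Function.Surjective (Abelianization.of (G := H)) :=
    fun H _ x => Quotient.inductionOn' x fun a => ⟨a, rfl⟩
  have hfinj : Function.Injective f := by
    rw [injective_iff_map_eq_one]
    intro x hx
    obtain ⟨n, rfl⟩ := hofsurj ↥ψ.ker _ x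
    rw [hfdef, Abelianization.map_of] at hx
    have hcomm : (ψ.ker.subtype n : ∀ i, G i) ∈ commutator (∀ i, G i) :=
      (QuotientGroup.eq_one_iff _).mp hx
    exact hker_comm n hcomm
  have hgsurj : Function.Surjective g := by
    intro c
    obtain ⟨x, hx⟩ := hψ c
    exact ⟨Abelianization.of x, by rw [hgdef, Abelianization.lift_apply_of]; exact hx⟩
  have hexact : ∀ x : Abelianization (∀ i, G i), g x = 1 ↔ ∃ y, f y = x := by
    intro x
    constructor
    · intro hx
      obtain ⟨a, rfl⟩ := hofsurj _ _ x
      rw [hgdef, Abelianization.lift_apply_of] at hx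
      exact ⟨Abelianization.of (⟨a, hx⟩ : ψ.ker),
        by rw [hfdef, Abelianization.map_of]; rfl⟩
    · rintro ⟨y, rfl⟩
      obtain ⟨nn, rfl⟩ := hofsurj _ _ y
      rw [hfdef, Abelianization.map_of, hgdef, Abelianization.lift_apply_of]
      exact nn.2
  -- pass to ℤ-linear maps on the additivized abelianizations
  let f' : Additive (Abelianization ↥ψ.ker) →ₗ[ℤ] Additive (Abelianization (∀ i, G i)) :=
    (MonoidHom.toAdditive f).toIntLinearMap
  let g' : Additive (Abelianization (∀ i, G i)) →ₗ[ℤ]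
      Additive (Multiplicative (Fin k → ℤ)) :=
    (MonoidHom.toAdditive g).toIntLinearMap
  have hf'inj : Function.Injective f' := fun x y hxy => hfinj hxy
  have hg'surj : Function.Surjective g' := fun c => hgsurj c
  have hexact' : Function.Exact f' g' := fun y => (hexact y).trans Iff.rfl
  -- base change to ℚ
  let F : ℚ ⊗[ℤ] Additive (Abelianization ↥ψ.ker) →ₗ[ℚ]
      ℚ ⊗[ℤ] Additive (Abelianization (∀ i, G i)) := f'.baseChange ℚ
  let Gm : ℚ ⊗[ℤ] Additive (Abelianization (∀ i, G i)) →ₗ[ℚ]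
      ℚ ⊗[ℤ] Additive (Multiplicative (Fin k → ℤ)) := g'.baseChange ℚ
  have hFcoe : (F : _ → _) = f'.lTensor ℚ := rfl
  have hGcoe : (Gm : _ → _) = g'.lTensor ℚ := rfl
  have hFinj : Function.Injective F := by
    rw [hFcoe]
    exact Module.Flat.lTensor_preserves_injective_linearMap f' hf'inj
  have hGsurj' : Function.Surjective Gm := by
    rw [hGcoe]
    exact LinearMap.lTensor_surjective ℚ hg'surj
  have hEx : Function.Exact F Gm := by
    rw [show (F : _ → _) = ⇑(f'.lTensor ℚ) from rfl,
      show (Gm : _ → _) = ⇑(g'.lTensor ℚ) from rfl]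
    exact Module.Flat.lTensor_exact ℚ hexact'
  -- finiteness
  haveI : Group.FG (∀ i, G i) := aux_group_fg_pi hfg
  haveI : Module.Finite ℤ (Additive (Abelianization (∀ i, G i))) :=
    aux_module_finite_ab _
  haveI : Module.Finite ℚ (ℚ ⊗[ℤ] Additive (Abelianization (∀ i, G i))) :=
    Module.Finite.base_change ℤ ℚ _
  -- rank computation
  have hrank := LinearMap.finrank_range_add_finrank_ker Gm
  have hkerGm : LinearMap.ker Gm = LinearMap.range F := LinearMap.exact_iff.mp hEx
  have hrangeGm : LinearMap.range Gm = ⊤ := LinearMap.range_eq_top.mpr hGsurj'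
  have hCk : Module.finrank ℚ (ℚ ⊗[ℤ] Additive (Multiplicative (Fin k → ℤ))) = k := by
    have e : Additive (Multiplicative (Fin k → ℤ)) ≃+ (Fin k → ℤ) :=
      { Additive.toMul.trans Multiplicative.toAdd with map_add' := fun _ _ => rfl }
    rw [LinearEquiv.finrank_eq (LinearEquiv.baseChange ℤ ℚ _ _ e.toIntLinearEquiv),
      Module.finrank_baseChange, Module.finrank_fin_fun]
  have hBr : Module.finrank ℚ (LinearMap.range F)
      = Module.finrank ℚ (ℚ ⊗[ℤ] Additive (Abelianization ↥ψ.ker)) :=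
    (LinearEquiv.finrank_eq (LinearEquiv.ofInjective F hFinj)).symm
  rw [hrangeGm, hkerGm, hBr] at hrank
  rw [finrank_top, hCk] at hrank
  show Module.finrank ℚ (ℚ ⊗[ℤ] Additive (Abelianization (∀ i, G i)))
    = k + Module.finrank ℚ (ℚ ⊗[ℤ] Additive (Abelianization ↥ψ.ker))
  omega
end

section
/- Let k ≥ 1 and r ≥ 3 be integers, let G₁, …, G_r be finitely generated groups, and let ψ : G₁ × ⋯ × G_r → ℤ^k be a surjective group homomorphism such that the restriction of ψ to each of at least three distinct factors G_i is surjective onto ℤ^k. If b₁(G₁) + ⋯ + b₁(G_r) − k is odd, then the first Betti number b₁(ker ψ) is odd. (Corollary 7.3, Betti number parity; this is the obstruction used to show ker ψ is not Kähler.) -/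
open scoped TensorProduct

open scoped commutatorElement

section Aux

lemma abelianization_of_surjective {H : Type*} [Group H] :
    Function.Surjective (Abelianization.of (G := H)) :=
  fun y => QuotientGroup.induction_on y fun g => ⟨g, rfl⟩

variable {k r : ℕ} {G : Fin r → Type*} [∀ i, Group (G i)]
  (ψ : (∀ i, G i) →* Multiplicative (Fin k → ℤ))

lemma betti_single_mem (i j l : Fin r) (hji : j ≠ i) (hli : l ≠ i) (hjl : j ≠ l)
    (hj : Function.Surjective (ψ.comp (MonoidHom.mulSingle G j)))
    (hl : Function.Surjective (ψ.comp (MonoidHom.mulSingle G l)))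
    (x y : G i) :
    Pi.mulSingle i ⁅x, y⁆ ∈ (commutator ↥ψ.ker).map ψ.ker.subtype := by
  obtain ⟨c, hc⟩ := hj (ψ (Pi.mulSingle i x))⁻¹
  obtain ⟨d, hd⟩ := hl (ψ (Pi.mulSingle i y))⁻¹
  simp only [MonoidHom.comp_apply, MonoidHom.mulSingle_apply] at hc hd
  have hu : Pi.mulSingle i x * Pi.mulSingle j c ∈ ψ.ker := by
    rw [MonoidHom.mem_ker, map_mul, hc, mul_inv_cancel]
  have hv : Pi.mulSingle i y * Pi.mulSingle l d ∈ ψ.ker := by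
    rw [MonoidHom.mem_ker, map_mul, hd, mul_inv_cancel]
  have key : ⁅Pi.mulSingle i x * Pi.mulSingle j c, Pi.mulSingle i y * Pi.mulSingle l d⁆
      = Pi.mulSingle i ⁅x, y⁆ := by
    funext t
    by_cases h1 : t = i
    · subst h1
      simp [commutatorElement_def, Pi.mulSingle_eq_of_ne (Ne.symm hji),
        Pi.mulSingle_eq_of_ne (Ne.symm hli)]
    · by_cases h2 : t = j
      · subst h2
        simp [commutatorElement_def, Pi.mulSingle_eq_of_ne hji, Pi.mulSingle_eq_of_ne hjl]
      · by_cases h3 : t = l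
        · subst h3
          simp [commutatorElement_def, Pi.mulSingle_eq_of_ne hli,
            Pi.mulSingle_eq_of_ne (Ne.symm hjl)]
        · simp [commutatorElement_def, Pi.mulSingle_eq_of_ne h1, Pi.mulSingle_eq_of_ne h2,
            Pi.mulSingle_eq_of_ne h3]
  refine ⟨⁅(⟨_, hu⟩ : ψ.ker), (⟨_, hv⟩ : ψ.ker)⁆, ?_, ?_⟩
  · rw [commutator_def]
    exact Subgroup.commutator_mem_commutator (Subgroup.mem_top _) (Subgroup.mem_top _)
  · rw [map_commutatorElement]
    exact key

lemma betti_commutator_le (i₁ i₂ i₃ : Fin r)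
    (h12 : i₁ ≠ i₂) (h13 : i₁ ≠ i₃) (h23 : i₂ ≠ i₃)
    (hs : ∀ i ∈ ({i₁, i₂, i₃} : Set (Fin r)),
      Function.Surjective (ψ.comp (MonoidHom.mulSingle G i))) :
    commutator (∀ i, G i) ≤ (commutator ↥ψ.ker).map ψ.ker.subtype := by
  rw [commutator_def, Subgroup.commutator_le]
  intro a _ b _
  rw [show ⁅a, b⁆ = (fun i => ⁅a i, b i⁆) from rfl,
    ← Finset.noncommProd_mulSingle (fun i => ⁅a i, b i⁆)]
  refine Subgroup.noncommProd_mem _ _ fun i _ => ?_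
  have hs1 := hs i₁ (by simp)
  have hs2 := hs i₂ (by simp)
  have hs3 := hs i₃ (by simp)
  rcases eq_or_ne i i₁ with rfl | hne1
  · exact betti_single_mem ψ i i₂ i₃ (Ne.symm h12) (Ne.symm h13) h23 hs2 hs3 _ _
  rcases eq_or_ne i i₂ with rfl | hne2
  · exact betti_single_mem ψ i i₁ i₃ h12 (Ne.symm h23) h13 hs1 hs3 _ _
  · exact betti_single_mem ψ i i₁ i₂ (Ne.symm hne1) (Ne.symm hne2) h12 hs1 hs2 _ _

noncomputable def abPiEquiv : Abelianization (∀ i, G i) ≃* ∀ i, Abelianization (G i) := by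
  classical
  let F₁ : Abelianization (∀ i, G i) →* ∀ i, Abelianization (G i) :=
    Abelianization.lift
      { toFun := fun g i => Abelianization.of (g i)
        map_one' := funext fun i => map_one _
        map_mul' := fun a b => funext fun i => map_mul _ _ _ }
  let F₂ : (∀ i, Abelianization (G i)) →* Abelianization (∀ i, G i) :=
    MonoidHom.noncommPiCoprod (fun i => Abelianization.map (MonoidHom.mulSingle G i))
      (fun i j _ x y => Commute.all _ _)
  have h2 : ∀ (i) (z : Abelianization (G i)),
      F₂ (Pi.mulSingle i z) = Abelianization.map (MonoidHom.mulSingle G i) z :=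
    fun i z => by apply MonoidHom.noncommPiCoprod_mulSingle
  refine MonoidHom.toMulEquiv F₁ F₂ ?_ ?_
  · apply Abelianization.hom_ext
    ext g
    simp only [MonoidHom.comp_apply, MonoidHom.id_apply]
    have h1 : F₁ (Abelianization.of g) = fun i => Abelianization.of (g i) := rfl
    rw [h1]
    rw [← Finset.univ_prod_mulSingle (fun i => Abelianization.of (g i)), map_prod]
    rw [Finset.prod_congr rfl (fun i _ => h2 i (Abelianization.of (g i)))]
    simp only [Abelianization.map_of]
    conv_rhs => rw [← Finset.noncommProd_mulSingle g]
    erw [Finset.map_noncommProd, Finset.noncommProd_eq_prod]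
    simp only [MonoidHom.mulSingle_apply]
  · apply MonoidHom.pi_ext
    intro i x
    obtain ⟨y, rfl⟩ := abelianization_of_surjective x
    simp only [MonoidHom.comp_apply, MonoidHom.id_apply]
    rw [h2]
    show (fun t => Abelianization.of (Pi.mulSingle i y t)) = Pi.mulSingle i (Abelianization.of y)
    funext t
    rcases eq_or_ne t i with rfl | h
    · simp
    · simp [Pi.mulSingle_eq_of_ne h]

end Aux

/-- Corollary 7.3 (parity): if `ψ : G₁ × ⋯ × G_r → ℤ^k` is an epimorphism of finitely
generated groups whose restriction to at least three distinct factors is surjective, and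
`b₁(G₁) + ⋯ + b₁(G_r) − k` is odd, then `b₁(ker ψ)` is odd. -/
theorem stmt_13 {k r : ℕ} (hk : 1 ≤ k) (hr : 3 ≤ r)
    (G : Fin r → Type*) [∀ i, Group (G i)] (hfg : ∀ i, Group.FG (G i))
    (ψ : (∀ i, G i) →* Multiplicative (Fin k → ℤ)) (hψ : Function.Surjective ψ)
    (i₁ i₂ i₃ : Fin r) (h12 : i₁ ≠ i₂) (h13 : i₁ ≠ i₃) (h23 : i₂ ≠ i₃)
    (hs : ∀ i ∈ ({i₁, i₂, i₃} : Set (Fin r)),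
      Function.Surjective (ψ.comp (MonoidHom.mulSingle G i)))
    (hodd : Odd ((∑ i, (firstBetti (G i) : ℤ)) - (k : ℤ))) :
    Odd (firstBetti ↥ψ.ker) := by
  classical
  let fmul : Abelianization ↥ψ.ker →* Abelianization (∀ i, G i) :=
    Abelianization.map ψ.ker.subtype
  let gmul : Abelianization (∀ i, G i) →* Multiplicative (Fin k → ℤ) := Abelianization.lift ψ
  let f₁ : (Additive (Abelianization ↥ψ.ker)) →ₗ[ℤ] (Additive (Abelianization (∀ i, G i))) :=
    (MonoidHom.toAdditive fmul).toIntLinearMap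
  let g₁ : (Additive (Abelianization (∀ i, G i))) →ₗ[ℤ] (Fin k → ℤ) :=
    (MonoidHom.toAdditiveLeft gmul).toIntLinearMap
  have hcomm_le := betti_commutator_le ψ i₁ i₂ i₃ h12 h13 h23 hs
  have hfmul_inj : Function.Injective fmul := by
    rw [injective_iff_map_eq_one]
    intro a ha
    obtain ⟨n, rfl⟩ := abelianization_of_surjective a
    have hx : (n : ∀ i, G i) ∈ commutator (∀ i, G i) := (QuotientGroup.eq_one_iff _).mp ha
    obtain ⟨m, hm, hmn⟩ := hcomm_le hx
    have hmn' : m = n := Subtype.ext (by simpa using hmn)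
    subst hmn'
    exact (QuotientGroup.eq_one_iff _).mpr hm
  have hf_inj : Function.Injective ⇑f₁ := hfmul_inj
  have hg_surj : Function.Surjective ⇑g₁ := by
    intro z
    obtain ⟨a, ha⟩ := hψ (Multiplicative.ofAdd z)
    exact ⟨Additive.ofMul (Abelianization.of a), congrArg Multiplicative.toAdd ha⟩
  have hofG : Function.Surjective
      (fun a : (∀ i, G i) => Additive.ofMul (Abelianization.of a)) := fun y => by
    obtain ⟨a, ha⟩ := abelianization_of_surjective (Additive.toMul y)
    exact ⟨a, congrArg Additive.ofMul ha⟩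
  have hofN : Function.Surjective
      (fun n : ↥ψ.ker => Additive.ofMul (Abelianization.of n)) := fun y => by
    obtain ⟨a, ha⟩ := abelianization_of_surjective (Additive.toMul y)
    exact ⟨a, congrArg Additive.ofMul ha⟩
  have hexact : Function.Exact ⇑f₁ ⇑g₁ := by
    intro y
    obtain ⟨a, rfl⟩ := hofG y
    constructor
    · intro h
      have ha : a ∈ ψ.ker := by
        rw [MonoidHom.mem_ker]
        exact congrArg Multiplicative.ofAdd h
      exact ⟨Additive.ofMul (Abelianization.of (⟨a, ha⟩ : ψ.ker)), rfl⟩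
    · rintro ⟨x, hx⟩
      obtain ⟨n, rfl⟩ := hofN x
      rw [← hx]
      exact congrArg Multiplicative.toAdd (MonoidHom.mem_ker.mp n.2)
  haveI hflat : Module.Flat ℤ ℚ := IsLocalization.flat ℚ (nonZeroDivisors ℤ)
  have hFi : Function.Injective ⇑(f₁.baseChange ℚ) := by
    rw [LinearMap.baseChange_eq_ltensor]
    exact Module.Flat.lTensor_preserves_injective_linearMap f₁ hf_inj
  have hGs : Function.Surjective ⇑(g₁.baseChange ℚ) := by
    rw [LinearMap.baseChange_eq_ltensor]
    exact LinearMap.lTensor_surjective ℚ hg_surj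
  have hE : Function.Exact ⇑(f₁.baseChange ℚ) ⇑(g₁.baseChange ℚ) := by
    rw [LinearMap.baseChange_eq_ltensor, LinearMap.baseChange_eq_ltensor]
    exact Module.Flat.lTensor_exact ℚ hexact
  haveI inst1 : ∀ i, Module.Finite ℤ (Additive (Abelianization (G i))) := fun i => by
    haveI := hfg i
    haveI hab : Group.FG (Abelianization (G i)) :=
      Group.fg_of_surjective abelianization_of_surjective
    exact Module.Finite.iff_addGroup_fg.mpr (GroupFG.iff_add_fg.mp hab)
  have e3 : Additive (Abelianization (∀ i, G i)) ≃+ (∀ i, Additive (Abelianization (G i))) :=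
    MulEquiv.toAdditive (abPiEquiv (G := G))
  let eV : (ℚ ⊗[ℤ] Additive (Abelianization (∀ i, G i))) ≃ₗ[ℚ]
      (∀ i, ℚ ⊗[ℤ] Additive (Abelianization (G i))) :=
    (TensorProduct.AlgebraTensorModule.congr (LinearEquiv.refl ℚ ℚ)
      e3.toIntLinearEquiv).trans (TensorProduct.piRight ℤ ℚ ℚ _)
  haveI hfd : FiniteDimensional ℚ (ℚ ⊗[ℤ] Additive (Abelianization (∀ i, G i))) :=
    Module.Finite.equiv eV.symm
  have hrn := LinearMap.finrank_range_add_finrank_ker (g₁.baseChange ℚ)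
  have hRange : LinearMap.range (g₁.baseChange ℚ) = ⊤ := LinearMap.range_eq_top.mpr hGs
  have hKer : LinearMap.ker (g₁.baseChange ℚ) = LinearMap.range (f₁.baseChange ℚ) :=
    LinearMap.exact_iff.mp hE
  have hV3 : Module.finrank ℚ (ℚ ⊗[ℤ] (Fin k → ℤ)) = k := by
    rw [(TensorProduct.piScalarRight ℤ ℚ ℚ (Fin k)).finrank_eq]
    simp
  have hV1 : Module.finrank ℚ ↥(LinearMap.range (f₁.baseChange ℚ)) = firstBetti ↥ψ.ker :=
    LinearMap.finrank_range_of_inj hFi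
  have hV2 : Module.finrank ℚ (ℚ ⊗[ℤ] Additive (Abelianization (∀ i, G i)))
      = ∑ i, firstBetti (G i) := by
    rw [eV.finrank_eq, Module.finrank_pi_fintype]
    rfl
  rw [hRange, hKer, finrank_top, hV1, hV2, hV3] at hrn
  -- hrn : k + firstBetti ↥ψ.ker = ∑ i, firstBetti (G i)
  have key : ((∑ i, (firstBetti (G i) : ℤ)) - (k : ℤ)) = (firstBetti ↥ψ.ker : ℤ) := by
    have : ((k : ℤ)) + (firstBetti ↥ψ.ker : ℤ) = ∑ i, (firstBetti (G i) : ℤ) := by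
      exact_mod_cast congrArg (Nat.cast : ℕ → ℤ) hrn
    omega
  rw [key] at hodd
  exact (Int.odd_coe_nat _).mp hodd
end

section
/- Let r ≥ 1 and let Λ₁, …, Λ_r be groups such that, for each i: (a) no finite index subgroup of Λ_i is abelian, and (b) the centralizer in Λ_i of every nontrivial element of Λ_i is abelian. Let P = Λ₁ × ⋯ × Λ_r and let H₁, H₂ ≤ P be subgroups such that every element of H₁ commutes with every element of H₂ and the subgroup generated by H₁ ∪ H₂ has finite index in P. Then for every index i, at least one of the projections p_i(H₁), p_i(H₂) to the factor Λ_i is the trivial subgroup. (Splitting step in the proof of Lemma 5.3; for limit groups, hypotheses (a) and (b) hold since centralizers of nontrivial elements are infinite cyclic.) -/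
/-!
Fix a factor `Λ = Λ_i` and let `A`, `B` be the projections of `H₁`, `H₂`; they commute
elementwise and `A ⊔ B` has finite index in `Λ`. If both contained nontrivial elements
`x ∈ A` and `y ∈ B`, then `A` would lie in the abelian centralizer of `y` and `B` in that of
`x`, so `A` and `B` would be abelian; being mutually commuting, they generate an abelian
subgroup `A ⊔ B` of finite index, which `Λ` does not have.
-/

namespace Subgroup

variable {G G' : Type*} [Group G] [Group G']

theorem le_centralizer_self_of_le {H K : Subgroup G} (hK : K ≤ centralizer K) (hHK : H ≤ K) :
    H ≤ centralizer H :=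
  hHK.trans (hK.trans (centralizer_le hHK))

theorem sup_le_centralizer_sup {A B : Subgroup G} (hA : A ≤ centralizer A)
    (hB : B ≤ centralizer B) (hAB : A ≤ centralizer B) :
    A ⊔ B ≤ centralizer (A ⊔ B : Subgroup G) :=
  sup_le (le_centralizer_iff.mpr (sup_le hA (le_centralizer_iff.mp hAB)))
    (le_centralizer_iff.mpr (sup_le hAB hB))

theorem map_le_centralizer_map {H K : Subgroup G} (f : G →* G') (h : H ≤ centralizer K) :
    H.map f ≤ centralizer (K.map f) :=
  (map_mono h).trans (map_centralizer_le_centralizer_image _ f)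

theorem eq_bot_or_eq_bot_of_le_centralizer
    (hfin : ∀ K : Subgroup G, K.index ≠ 0 → ¬ K ≤ centralizer K)
    (hcent : ∀ x : G, x ≠ 1 → centralizer {x} ≤ centralizer (centralizer {x}))
    {A B : Subgroup G} (hAB : A ≤ centralizer B) (hidx : (A ⊔ B).index ≠ 0) :
    A = ⊥ ∨ B = ⊥ := by
  rcases A.bot_or_exists_ne_one with hA | ⟨x, hxA, hx⟩
  · exact .inl hA
  rcases B.bot_or_exists_ne_one with hB | ⟨y, hyB, hy⟩
  · exact .inr hB
  have hAy : A ≤ centralizer {y} := hAB.trans (centralizer_le (by simpa using hyB))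
  have hBx : B ≤ centralizer {x} :=
    (le_centralizer_iff.mp hAB).trans (centralizer_le (by simpa using hxA))
  exact (hfin _ hidx (sup_le_centralizer_sup (le_centralizer_self_of_le (hcent y hy) hAy)
    (le_centralizer_self_of_le (hcent x hx) hBx) hAB)).elim

theorem index_map_ne_zero_of_surjective {H : Subgroup G} {f : G →* G'}
    (hf : Function.Surjective f) (hH : H.index ≠ 0) : (H.map f).index ≠ 0 :=
  ne_zero_of_dvd_ne_zero hH (index_map_dvd H hf)

end Subgroup

open Subgroup in
theorem stmt_14_general {r : ℕ} (Λ : Fin r → Type*) [∀ i, Group (Λ i)]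
    (ha : ∀ i, ∀ K : Subgroup (Λ i), K.index ≠ 0 →
      ¬ (∀ a ∈ K, ∀ b ∈ K, a * b = b * a))
    (hb : ∀ i, ∀ x : Λ i, x ≠ 1 →
      ∀ a ∈ Subgroup.centralizer {x}, ∀ b ∈ Subgroup.centralizer {x}, a * b = b * a)
    (H₁ H₂ : Subgroup (∀ i, Λ i))
    (hcomm : ∀ a ∈ H₁, ∀ b ∈ H₂, a * b = b * a)
    (hidx : (H₁ ⊔ H₂).index ≠ 0) :
    ∀ i, Subgroup.map (Pi.evalMonoidHom Λ i) H₁ = ⊥ ∨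
      Subgroup.map (Pi.evalMonoidHom Λ i) H₂ = ⊥ := by
  intro i
  have hH : H₁ ≤ centralizer H₂ := fun a haH b hbH => (hcomm a haH b hbH).symm
  refine eq_bot_or_eq_bot_of_le_centralizer
    (fun K hK hKK => ha i K hK fun a haK b hbK => hKK hbK a haK)
    (fun x hx a hxa b hxb => hb i x hx b hxb a hxa)
    (map_le_centralizer_map _ hH) ?_
  rw [← Subgroup.map_sup]
  exact index_map_ne_zero_of_surjective (Function.surjective_eval i) hidx

/-- Splitting step in the proof of Lemma 5.3: let `Λ₁, …, Λ_r` be groups with no abelian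
finite index subgroups in which centralizers of nontrivial elements are abelian. If
`H₁, H₂ ≤ Λ₁ × ⋯ × Λ_r` commute elementwise and together generate a finite index
subgroup, then for every `i` at least one of the projections `p_i(H₁)`, `p_i(H₂)`
is trivial. -/
theorem stmt_14 {r : ℕ} (hr : 1 ≤ r) (Λ : Fin r → Type*) [∀ i, Group (Λ i)]
    (ha : ∀ i, ∀ K : Subgroup (Λ i), K.index ≠ 0 →
      ¬ (∀ a ∈ K, ∀ b ∈ K, a * b = b * a))
    (hb : ∀ i, ∀ x : Λ i, x ≠ 1 →
      ∀ a ∈ Subgroup.centralizer {x}, ∀ b ∈ Subgroup.centralizer {x}, a * b = b * a)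
    (H₁ H₂ : Subgroup (∀ i, Λ i))
    (hcomm : ∀ a ∈ H₁, ∀ b ∈ H₂, a * b = b * a)
    (hidx : (H₁ ⊔ H₂).index ≠ 0) :
    ∀ i, Subgroup.map (Pi.evalMonoidHom Λ i) H₁ = ⊥ ∨
      Subgroup.map (Pi.evalMonoidHom Λ i) H₂ = ⊥ :=
  stmt_14_general Λ ha hb H₁ H₂ hcomm hidx
end

section
/- Let r ≥ 2 and let Γ₁, …, Γ_r be groups in which every finitely generated normal subgroup is either trivial or of finite index. Let G ≤ Γ₁ × ⋯ × Γ_r be a subgroup such that: (a) G is subdirect, i.e. p_i(G) = Γ_i for every coordinate projection p_i; (b) G is full, i.e. the intersection G ∩ Γ_j is nontrivial for every j, where Γ_j is regarded as the subgroup of the product with trivial coordinates away from position j; and (c) for every i the normal subgroup N_i = G ∩ (Γ₁ × ⋯ × Γ_{i−1} × 1 × Γ_{i+1} × ⋯ × Γ_r) of G is finitely generated. Then for all i ≠ j the projection p_{i,j}(G) is a finite index subgroup of Γ_i × Γ_j; in particular G virtually surjects onto pairs. (Group-theoretic content of the proof of Lemma 9.2.) -/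
/-!
Fix `i ≠ j` and let `P = p_{i,j}(G) ≤ Γ_i × Γ_j`. Both projections of `P` are onto, so by
Goursat's lemma `P` contains `M_i × M_j`, where `M_i = p_i(N_j)` and `M_j = p_j(N_i)` are normal
with `Γ_i ⧸ M_i ≃ Γ_j ⧸ M_j`. Now `M_i` is finitely generated as the image of `N_j`, and it is
nontrivial because `G` is full; by the hypothesis on `Γ_i` it has finite index, hence so do `M_j`,
`M_i × M_j` and `P`.
-/

open Function

namespace Subgroup

variable {K A B : Type*} [Group K] [Group A] [Group B]

theorem FG.map {H : Subgroup K} (hH : H.FG) (f : K →* A) : (H.map f).FG :=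
  (fg_iff_submonoid_fg _).2 (((fg_iff_submonoid_fg H).1 hH).map f)

theorem index_ne_zero_of_goursatFst {I : Subgroup (A × B)}
    (hI₁ : Surjective (Prod.fst ∘ I.subtype)) (hI₂ : Surjective (Prod.snd ∘ I.subtype))
    (hI : I.goursatFst.index ≠ 0) : I.index ≠ 0 := by
  have := normal_goursatFst hI₁
  have := normal_goursatSnd hI₂
  obtain ⟨e, -⟩ := goursat_surjective hI₁ hI₂
  have hSnd : I.goursatSnd.index = I.goursatFst.index := by
    simp only [index_eq_card]
    exact Nat.card_congr e.toEquiv.symm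
  have hprod : (I.goursatFst.prod I.goursatSnd).index ≠ 0 := by
    rw [index_prod, hSnd]
    exact mul_ne_zero hI hI
  exact ne_zero_of_dvd_ne_zero hprod (index_dvd_of_le (goursatFst_prod_goursatSnd_le I))

variable (H : Subgroup K) (f : K →* A) (g : K →* B)

theorem goursatFst_map_prod : (H.map (f.prod g)).goursatFst = (H ⊓ g.ker).map f := by
  ext a
  simp only [mem_goursatFst, mem_map, MonoidHom.prod_apply, Prod.mk.injEq, mem_inf,
    MonoidHom.mem_ker]
  grind

variable {H f g}

theorem surjective_fst_comp_subtype_map_prod (hf : H.map f = ⊤) :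
    Surjective (Prod.fst ∘ (H.map (f.prod g)).subtype) := by
  intro a
  obtain ⟨x, hx, rfl⟩ := hf.ge (mem_top a)
  exact ⟨⟨f.prod g x, mem_map_of_mem _ hx⟩, rfl⟩

theorem surjective_snd_comp_subtype_map_prod (hg : H.map g = ⊤) :
    Surjective (Prod.snd ∘ (H.map (f.prod g)).subtype) := by
  intro b
  obtain ⟨x, hx, rfl⟩ := hg.ge (mem_top b)
  exact ⟨⟨f.prod g x, mem_map_of_mem _ hx⟩, rfl⟩

end Subgroup

theorem Subgroup.map_eval_inf_ker_eval_ne_bot {ι : Type*} {Γ : ι → Type*} [∀ i, Group (Γ i)]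
    {G : Subgroup (∀ i, Γ i)} {i j : ι} (hij : i ≠ j) {g : ∀ i, Γ i} (hgG : g ∈ G) (hg : g ≠ 1)
    (hg_supp : ∀ k, k ≠ i → g k = 1) :
    (G ⊓ (Pi.evalMonoidHom Γ j).ker).map (Pi.evalMonoidHom Γ i) ≠ ⊥ := by
  have hgi : g i ≠ 1 := fun hgi ↦ hg <| funext fun k ↦ by
    by_cases hk : k = i
    · subst hk; exact hgi
    · exact hg_supp k hk
  intro hbot
  exact hgi ((mem_bot).1 (hbot ▸ mem_map_of_mem _ ⟨hgG, hg_supp j hij.symm⟩))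

theorem stmt_15_general {r : ℕ} (Γ : Fin r → Type*) [∀ i, Group (Γ i)]
    (hnorm : ∀ i, ∀ N : Subgroup (Γ i), N.Normal → N.FG → N = ⊥ ∨ N.index ≠ 0)
    (G : Subgroup (∀ i, Γ i))
    (hsubdirect : ∀ i, Subgroup.map (Pi.evalMonoidHom Γ i) G = ⊤)
    (hfull : ∀ j, ∃ g ∈ G, g ≠ 1 ∧ ∀ i, i ≠ j → g i = 1)
    (hfg : ∀ i, (G ⊓ (Pi.evalMonoidHom Γ i).ker).FG) :
    ∀ i j, i ≠ j →
      (Subgroup.map ((Pi.evalMonoidHom Γ i).prod (Pi.evalMonoidHom Γ j)) G).index ≠ 0 := by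
  intro i j hij
  have hfst := Subgroup.surjective_fst_comp_subtype_map_prod
    (g := Pi.evalMonoidHom Γ j) (hsubdirect i)
  have hsnd := Subgroup.surjective_snd_comp_subtype_map_prod
    (f := Pi.evalMonoidHom Γ i) (hsubdirect j)
  have hM := Subgroup.goursatFst_map_prod G (Pi.evalMonoidHom Γ i) (Pi.evalMonoidHom Γ j)
  refine Subgroup.index_ne_zero_of_goursatFst hfst hsnd ?_
  refine (hnorm i _ (Subgroup.normal_goursatFst hfst) (hM ▸ (hfg j).map _)).resolve_left ?_
  obtain ⟨g, hgG, hg, hg_supp⟩ := hfull i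
  exact hM ▸ Subgroup.map_eval_inf_ker_eval_ne_bot hij hgG hg hg_supp

/-- Group-theoretic content of the proof of Lemma 9.2: let `Γ₁, …, Γ_r` be groups in which
every finitely generated normal subgroup is trivial or of finite index. If
`G ≤ Γ₁ × ⋯ × Γ_r` is a full subdirect product such that each
`N_i = G ∩ (Γ₁ × ⋯ × 1 × ⋯ × Γ_r)` is finitely generated, then `G` virtually surjects
onto pairs: `p_{i,j}(G)` has finite index in `Γ_i × Γ_j` for all `i ≠ j`. -/
theorem stmt_15 {r : ℕ} (hr : 2 ≤ r) (Γ : Fin r → Type*) [∀ i, Group (Γ i)]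
    (hnorm : ∀ i, ∀ N : Subgroup (Γ i), N.Normal → N.FG → N = ⊥ ∨ N.index ≠ 0)
    (G : Subgroup (∀ i, Γ i))
    (hsubdirect : ∀ i, Subgroup.map (Pi.evalMonoidHom Γ i) G = ⊤)
    (hfull : ∀ j, ∃ g ∈ G, g ≠ 1 ∧ ∀ i, i ≠ j → g i = 1)
    (hfg : ∀ i, (G ⊓ (Pi.evalMonoidHom Γ i).ker).FG) :
    ∀ i j, i ≠ j →
      (Subgroup.map ((Pi.evalMonoidHom Γ i).prod (Pi.evalMonoidHom Γ j)) G).index ≠ 0 :=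
  stmt_15_general Γ hnorm G hsubdirect hfull hfg
end
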